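/- Let (K, d) be a compact metric space, let γ = (γ₁, …, γₙ) be a system of proper contractions on K, and let φ: K → K be continuous with γ₁, …, γₙ as inverse branches. Assume that K is self-similar with respect to γ and that γ satisfies the measure separation condition in K. Let C_φ denote the (bounded) composition operator f ↦ f∘φ on the complex Hilbert space L²(K, μ^H). Then the Hilbert space adjoint C_φ* is given by (C_φ* f)(y) = (1/n)·Σ_{i=1}^n f(γᵢ(y)) for μ^H-almost every y; equivalently, C_φ* = (1/n)·Σ_{i=1}^n C_{γᵢ}, where C_{γᵢ} f = f∘γᵢ. -/

import Mathlib

/-!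
Since `φ ∘ γᵢ = id`, the self-similarity `n μ = ∑ᵢ (γᵢ)₊ μ` of the Hutchinson measure gives
`n ∫ ⟪f, g ∘ φ⟫ dμ = ∑ᵢ ∫ ⟪f ∘ γᵢ, g ∘ φ ∘ γᵢ⟫ dμ = ∑ᵢ ∫ ⟪f ∘ γᵢ, g⟫ dμ`, i.e.
`⟪f, C_φ g⟫ = ⟪(1/n) ∑ᵢ f ∘ γᵢ, g⟫` for all `g`. Domination `(γᵢ)₊ μ ≤ n μ` makes every
`f ∘ γᵢ` square integrable, so `(1/n) ∑ᵢ f ∘ γᵢ` is an element of `L²(μ)`, which must be `C_φ* f`.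
-/

open MeasureTheory Set Filter Topology
open scoped ENNReal NNReal

noncomputable section

/-- A continuous map `g : K → K` on a metric space is a *proper contraction* if there are
constants `0 < c₁ ≤ c₂ < 1` with `c₁ d(x,y) ≤ d(g x, g y) ≤ c₂ d(x,y)` for all `x, y`. -/
def ProperContraction {K : Type*} [MetricSpace K] (g : K → K) : Prop :=
  ∃ c₁ c₂ : ℝ, 0 < c₁ ∧ c₁ ≤ c₂ ∧ c₂ < 1 ∧
    ∀ x y : K, c₁ * dist x y ≤ dist (g x) (g y) ∧ dist (g x) (g y) ≤ c₂ * dist x y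

/-- `K` is self-similar with respect to the system `γ`: `K = ⋃ i, γ i (K)`. -/
def SelfSimilarSet {K : Type*} [MetricSpace K] {n : ℕ} (γ : Fin n → K → K) : Prop :=
  (⋃ i, γ i '' Set.univ) = Set.univ

/-- `μ` is a self-similar Borel probability measure for the system `γ` with weights `p`. -/
def IsSelfSimilarMeasure {K : Type*} [MetricSpace K] [MeasurableSpace K] {n : ℕ}
    (γ : Fin n → K → K) (p : Fin n → ℝ) (μ : Measure K) : Prop :=
  IsProbabilityMeasure μ ∧
    ∀ E : Set K, MeasurableSet E → μ E = ∑ i, ENNReal.ofReal (p i) * μ (γ i ⁻¹' E)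

/-- `μ` is the Hutchinson measure of the system `γ`: the self-similar probability measure
with all weights equal to `1/n`. -/
def IsHutchinsonMeasure {K : Type*} [MetricSpace K] [MeasurableSpace K] {n : ℕ}
    (γ : Fin n → K → K) (μ : Measure K) : Prop :=
  IsProbabilityMeasure μ ∧
    ∀ E : Set K, MeasurableSet E → μ E = (n : ℝ≥0∞)⁻¹ * ∑ i, μ (γ i ⁻¹' E)

/-- The system `γ` satisfies the measure separation condition: every self-similar measure gives
measure zero to `γ i (K) ∩ γ j (K)` for `i ≠ j`. -/
def MeasureSeparation {K : Type*} [MetricSpace K] [MeasurableSpace K] {n : ℕ}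
    (γ : Fin n → K → K) : Prop :=
  ∀ p : Fin n → ℝ, (∀ i, 0 < p i) → (∑ i, p i) = 1 →
    ∀ μ : Measure K, IsSelfSimilarMeasure γ p μ →
      ∀ i j : Fin n, i ≠ j → μ (γ i '' Set.univ ∩ γ j '' Set.univ) = 0

open scoped InnerProductSpace

theorem ProperContraction.continuous {K : Type*} [MetricSpace K] {g : K → K}
    (hg : ProperContraction g) : Continuous g := by
  obtain ⟨c₁, c₂, hc₁, hc₁₂, -, hdist⟩ := hg
  exact (LipschitzWith.of_dist_le_mul (K := ⟨c₂, hc₁.le.trans hc₁₂⟩)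
    fun x y => (hdist x y).2).continuous

theorem IsHutchinsonMeasure.sum_map_eq_smul {K : Type*} [MetricSpace K] [MeasurableSpace K]
    {n : ℕ} {γ : Fin n → K → K} {μ : Measure K} (hμ : IsHutchinsonMeasure γ μ) (hn : n ≠ 0)
    (hγ : ∀ i, Measurable (γ i)) : ∑ i, μ.map (γ i) = ((n : ℝ≥0) : ℝ≥0∞) • μ := by
  ext E hE
  rw [Measure.finsetSum_apply, Measure.smul_apply, smul_eq_mul, hμ.2 E hE, ← mul_assoc,
    ENNReal.coe_natCast, ENNReal.mul_inv_cancel (by exact_mod_cast hn) (ENNReal.natCast_ne_top n),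
    one_mul]
  exact Finset.sum_congr rfl fun i _ => Measure.map_apply (hγ i) hE

namespace MeasureTheory

section SumMapEqSmul

variable {α ι : Type*} [MeasurableSpace α] [Fintype ι] {μ : Measure α} {γ : ι → α → α} {c : ℝ≥0}

theorem map_le_smul_of_sum_map_eq_smul (hμ : ∑ i, μ.map (γ i) = (c : ℝ≥0∞) • μ) (i : ι) :
    μ.map (γ i) ≤ (c : ℝ≥0∞) • μ :=
  hμ ▸ Finset.single_le_sum (f := fun j => μ.map (γ j)) (fun _ _ => Measure.zero_le _)
    (Finset.mem_univ i)

theorem MemLp.comp_of_sum_map_eq_smul {E : Type*} [NormedAddCommGroup E] {p : ℝ≥0∞}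
    (hμ : ∑ i, μ.map (γ i) = (c : ℝ≥0∞) • μ) {i : ι} (hγ : Measurable (γ i)) {f : α → E}
    (hf : MemLp f p μ) : MemLp (fun x => f (γ i x)) p μ := by
  have hf_map : MemLp f p (μ.map (γ i)) :=
    (hf.smul_measure ENNReal.coe_ne_top).mono_measure (map_le_smul_of_sum_map_eq_smul hμ i)
  exact (memLp_map_measure_iff hf_map.aestronglyMeasurable hγ.aemeasurable).mp hf_map

theorem sum_integral_comp_eq_smul_integral {F : Type*} [NormedAddCommGroup F] [NormedSpace ℝ F]
    (hμ : ∑ i, μ.map (γ i) = (c : ℝ≥0∞) • μ) (hγ : ∀ i, Measurable (γ i)) {h : α → F}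
    (hh : Integrable h μ) : ∑ i, ∫ x, h (γ i x) ∂μ = (c : ℝ) • ∫ x, h x ∂μ := by
  have hh_map : ∀ i, Integrable h (μ.map (γ i)) := fun i =>
    (hh.smul_measure ENNReal.coe_ne_top).mono_measure (map_le_smul_of_sum_map_eq_smul hμ i)
  rw [← NNReal.smul_def, ← integral_smul_nnreal_measure, ENNReal.smul_def, ← hμ,
    integral_finsetSum_measure fun i _ => hh_map i]
  exact Finset.sum_congr rfl fun i _ =>
    (integral_map (hγ i).aemeasurable (hh_map i).aestronglyMeasurable).symm

end SumMapEqSmul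

section Adjoint

variable {α 𝕜 E : Type*} [MeasurableSpace α] [RCLike 𝕜] [NormedAddCommGroup E]
  [InnerProductSpace 𝕜 E] {μ : Measure α}

theorem MemLp.integrable_inner {f g : α → E} (hf : MemLp f 2 μ) (hg : MemLp g 2 μ) :
    Integrable (fun x => ⟪f x, g x⟫_𝕜) μ := by
  refine (L2.integrable_inner (𝕜 := 𝕜) (hf.toLp f) (hg.toLp g)).congr ?_
  filter_upwards [hf.coeFn_toLp, hg.coeFn_toLp] with x hfx hgx
  rw [hfx, hgx]

theorem adjoint_coeFn_eq_smul_sum_comp [CompleteSpace E] {ι : Type*} [Fintype ι]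
    {γ : ι → α → α} {c : ℝ≥0} (hμ : ∑ i, μ.map (γ i) = (c : ℝ≥0∞) • μ) (hc : c ≠ 0)
    (hγ : ∀ i, Measurable (γ i)) {φ : α → α} (hφγ : ∀ i x, φ (γ i x) = x)
    (T : Lp E 2 μ →L[𝕜] Lp E 2 μ) (hT : ∀ g : Lp E 2 μ, (T g : α → E) =ᵐ[μ] fun x => g (φ x))
    (f : Lp E 2 μ) :
    (ContinuousLinearMap.adjoint T f : α → E) =ᵐ[μ]
      fun y => ((c : ℝ) : 𝕜)⁻¹ • ∑ i, f (γ i y) := by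
  have hf_comp : ∀ i, MemLp (fun y => f (γ i y)) 2 μ := fun i =>
    (Lp.memLp f).comp_of_sum_map_eq_smul hμ (hγ i)
  have hw : MemLp (fun y => ((c : ℝ) : 𝕜)⁻¹ • ∑ i, f (γ i y)) 2 μ :=
    (memLp_finsetSum Finset.univ fun i _ => hf_comp i).const_smul ((c : ℝ) : 𝕜)⁻¹
  suffices ContinuousLinearMap.adjoint T f = hw.toLp _ from this ▸ hw.coeFn_toLp
  refine ext_inner_right 𝕜 fun g => ?_
  have hc' : ((c : ℝ) : 𝕜) ≠ 0 := by exact_mod_cast hc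
  have hgφ : MemLp (fun x => g (φ x)) 2 μ := (Lp.memLp (T g)).ae_eq (hT g)
  calc ⟪ContinuousLinearMap.adjoint T f, g⟫_𝕜
      = ∫ x, ⟪f x, g (φ x)⟫_𝕜 ∂μ := by
        rw [ContinuousLinearMap.adjoint_inner_left, L2.inner_def]
        refine integral_congr_ae ?_
        filter_upwards [hT g] with x hx
        rw [hx]
    _ = ((c : ℝ) : 𝕜)⁻¹ * ∑ i, ∫ x, ⟪f (γ i x), g (φ (γ i x))⟫_𝕜 ∂μ := by
        have key := sum_integral_comp_eq_smul_integral hμ hγ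
          ((Lp.memLp f).integrable_inner (𝕜 := 𝕜) hgφ)
        rw [key, RCLike.real_smul_eq_coe_mul, inv_mul_cancel_left₀ hc']
    _ = ∫ x, ⟪((c : ℝ) : 𝕜)⁻¹ • ∑ i, f (γ i x), g x⟫_𝕜 ∂μ := by
        simp only [hφγ, inner_smul_left, map_inv₀, RCLike.conj_ofReal, sum_inner]
        rw [integral_const_mul, integral_finsetSum _ fun i _ =>
          (hf_comp i).integrable_inner (Lp.memLp g)]
    _ = ⟪hw.toLp _, g⟫_𝕜 := by
        rw [L2.inner_def]
        refine integral_congr_ae ?_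
        filter_upwards [hw.coeFn_toLp] with x hx
        rw [hx]

end Adjoint

end MeasureTheory

theorem adjoint_of_composition_operator_general {K : Type*} [MetricSpace K]
    [MeasurableSpace K] [BorelSpace K] {n : ℕ} (hn : 1 ≤ n)
    (γ : Fin n → K → K) (hγ : ∀ i, ProperContraction (γ i))
    (φ : K → K) (hbranch : ∀ (i : Fin n) (x : K), φ (γ i x) = x)
    (μ : Measure K) (hμ : IsHutchinsonMeasure γ μ)
    (Cφ : Lp ℂ 2 μ →L[ℂ] Lp ℂ 2 μ)
    (hCφ : ∀ f : Lp ℂ 2 μ, (Cφ f : K → ℂ) =ᵐ[μ] fun x => f (φ x)) :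
    ∀ f : Lp ℂ 2 μ,
      ((ContinuousLinearMap.adjoint Cφ) f : K → ℂ) =ᵐ[μ]
        fun y => (n : ℂ)⁻¹ * ∑ i, f (γ i y) := by
  intro f
  have hγm : ∀ i, Measurable (γ i) := fun i => (hγ i).continuous.measurable
  have hn0 : n ≠ 0 := Nat.one_le_iff_ne_zero.mp hn
  filter_upwards [adjoint_coeFn_eq_smul_sum_comp (hμ.sum_map_eq_smul hn0 hγm)
    (by exact_mod_cast hn0) hγm hbranch Cφ hCφ f] with y hy
  simpa using hy

/-- Under self-similarity and measure separation, the Hilbert space adjoint of the composition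
operator `C_φ` on `L²(K, μ^H)` is given by `(C_φ* f)(y) = (1/n) ∑ᵢ f(γᵢ(y))` a.e. -/
theorem adjoint_of_composition_operator {K : Type*} [MetricSpace K] [CompactSpace K] [Nonempty K]
    [MeasurableSpace K] [BorelSpace K] {n : ℕ} (hn : 1 ≤ n)
    (γ : Fin n → K → K) (hγ : ∀ i, ProperContraction (γ i))
    (φ : K → K) (hφ : Continuous φ) (hbranch : ∀ (i : Fin n) (x : K), φ (γ i x) = x)
    (hss : SelfSimilarSet γ) (hsep : MeasureSeparation γ)
    (μ : Measure K) (hμ : IsHutchinsonMeasure γ μ)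
    (Cφ : Lp ℂ 2 μ →L[ℂ] Lp ℂ 2 μ)
    (hCφ : ∀ f : Lp ℂ 2 μ, (Cφ f : K → ℂ) =ᵐ[μ] fun x => f (φ x)) :
    ∀ f : Lp ℂ 2 μ,
      ((ContinuousLinearMap.adjoint Cφ) f : K → ℂ) =ᵐ[μ]
        fun y => (n : ℂ)⁻¹ * ∑ i, f (γ i y) :=
  adjoint_of_composition_operator_general hn γ hγ φ hbranch μ hμ Cφ hCφ
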